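/- arXiv:2205.04822 — 5 statements merged into one kernel-verified Lean document; each statement's English description precedes it below -/
import Mathlib

section
/- Weakening conjunctions: for every valuation ε, pGCL program s, pDL formulae φ₁, φ₂, and expectation lower bound p, if ε ⊨ [s]_p (φ₁ ∧ φ₂) then ε ⊨ [s]_p φ₁ and ε ⊨ [s]_p φ₂. -/
namespace PGCL

/-- Program valuations: maps from program variables to real values. -/
abbrev PVal : Type := String → ℝ

/-- Logical environments: maps from logical variables to their values.
    Logical variables are disjoint from program variables and cannot be
    accessed by programs. -/
abbrev LEnv : Type := String → ℝ

/-- Syntax of the probabilistic guarded command language pGCL.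
    Expressions are embedded shallowly as functions of the valuation. -/
inductive Stmt : Type
  | skip : Stmt
  | assign (x : String) (e : PVal → ℝ) : Stmt
  | seq (s₁ s₂ : Stmt) : Stmt
  /-- demonic (non-deterministic) choice `s₁ ⊓ s₂` -/
  | dem (s₁ s₂ : Stmt) : Stmt
  /-- probabilistic choice `s₁ [e] s₂` -/
  | prob (e : PVal → ℝ) (s₁ s₂ : Stmt) : Stmt
  | ifte (e : PVal → Bool) (s₁ s₂ : Stmt) : Stmt
  | whileLoop (e : PVal → Bool) (s : Stmt) : Stmt

/-- States of the MDP semantics: a valuation paired with the remaining program.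
    `(ε, Stmt.skip)` is final. -/
abbrev PState : Type := PVal × Stmt

/-- A positional policy resolves each demonic choice (true = left branch). -/
abbrev Policy : Type := PState → Bool

/-- One-step transition relation of the MDP semantics of pGCL, under policy `π`:
    `Step π σ p σ'` means σ steps to σ' with probability `p`. -/
inductive Step (π : Policy) : PState → ℝ → PState → Prop
  | assign {ε : PVal} {x : String} {e : PVal → ℝ} :
      Step π (ε, Stmt.assign x e) 1 (Function.update ε x (e ε), Stmt.skip)
  | seqSkip {ε ε' : PVal} {s₁ s₂ : Stmt} {p : ℝ} :
      Step π (ε, s₁) p (ε', s₂) → Step π (ε, Stmt.seq Stmt.skip s₁) p (ε', s₂)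
  | seqStep {ε ε' : PVal} {s₁ s₂ s : Stmt} {p : ℝ} :
      Step π (ε, s₁) p (ε', s₂) → Step π (ε, Stmt.seq s₁ s) p (ε', Stmt.seq s₂ s)
  | probL {ε : PVal} {e : PVal → ℝ} {s₁ s₂ : Stmt} :
      0 ≤ e ε → e ε ≤ 1 → Step π (ε, Stmt.prob e s₁ s₂) (e ε) (ε, s₁)
  | probR {ε : PVal} {e : PVal → ℝ} {s₁ s₂ : Stmt} :
      0 ≤ e ε → e ε ≤ 1 → Step π (ε, Stmt.prob e s₁ s₂) (1 - e ε) (ε, s₂)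
  | demL {ε : PVal} {s₁ s₂ : Stmt} :
      π (ε, Stmt.dem s₁ s₂) = true → Step π (ε, Stmt.dem s₁ s₂) 1 (ε, s₁)
  | demR {ε : PVal} {s₁ s₂ : Stmt} :
      π (ε, Stmt.dem s₁ s₂) = false → Step π (ε, Stmt.dem s₁ s₂) 1 (ε, s₂)
  | iteT {ε : PVal} {e : PVal → Bool} {s₁ s₂ : Stmt} :
      e ε = true → Step π (ε, Stmt.ifte e s₁ s₂) 1 (ε, s₁)
  | iteF {ε : PVal} {e : PVal → Bool} {s₁ s₂ : Stmt} :
      e ε = false → Step π (ε, Stmt.ifte e s₁ s₂) 1 (ε, s₂)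
  | whileT {ε : PVal} {e : PVal → Bool} {s : Stmt} :
      e ε = true →
        Step π (ε, Stmt.whileLoop e s) 1 (ε, Stmt.seq s (Stmt.whileLoop e s))
  | whileF {ε : PVal} {e : PVal → Bool} {s : Stmt} :
      e ε = false → Step π (ε, Stmt.whileLoop e s) 1 (ε, Stmt.skip)

/-- Finite paths under a policy `π` from a state to a final state. -/
inductive MPath (π : Policy) : PState → Type
  | nil (ε : PVal) : MPath π (ε, Stmt.skip)
  | cons {σ σ' : PState} (p : ℝ) (h : Step π σ p σ') (rest : MPath π σ') : MPath π σ

/-- The probability of a path: the product of its transition probabilities. -/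
noncomputable def MPath.prob {π : Policy} : {σ : PState} → MPath π σ → ℝ
  | _, .nil _ => 1
  | _, .cons p _ rest => p * rest.prob

/-- The valuation in the final state of a path. -/
def MPath.finalVal {π : Policy} : {σ : PState} → MPath π σ → PVal
  | _, .nil ε => ε
  | _, .cons _ _ rest => rest.finalVal

/-- Expected reward `E_{σ,π} r`: the sum over all paths from σ under π of the
    probability of the path times the reward of its final valuation. -/
noncomputable def expReward (π : Policy) (σ : PState) (r : PVal → ℝ) : ℝ :=
  ∑' ρ : MPath π σ, ρ.prob * r ρ.finalVal

/-- Expectation `𝔼_σ r`: infimum over all policies of the expected reward. -/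
noncomputable def expectation (σ : PState) (r : PVal → ℝ) : ℝ :=
  ⨅ π : Policy, expReward π σ r

open Classical in
/-- Characteristic (indicator) function of a proposition. -/
noncomputable def ind (P : Prop) : ℝ := if P then 1 else 0

/-- Formulae of probabilistic dynamic logic pDL. Atomic formulae are embedded
    shallowly as predicates over the program valuation and logical environment. -/
inductive Formula : Type
  | atom (A : PVal → LEnv → Prop) : Formula
  | neg (φ : Formula) : Formula
  | conj (φ₁ φ₂ : Formula) : Formula
  /-- universal quantification over the logical variable `l` (domain ℝ) -/
  | all (l : String) (φ : Formula) : Formula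
  /-- the p-box modality `[s]_p φ` -/
  | box (s : Stmt) (p : PVal → ℝ) (φ : Formula) : Formula

/-- Satisfaction `ε, η ⊨ φ` of pDL formulae. -/
def Sat : Formula → PVal → LEnv → Prop
  | .atom A, ε, η => A ε η
  | .neg φ, ε, η => ¬ Sat φ ε η
  | .conj φ₁ φ₂, ε, η => Sat φ₁ ε η ∧ Sat φ₂ ε η
  | .all l φ, ε, η => ∀ v : ℝ, Sat φ ε (Function.update η l v)
  | .box s p φ, ε, η => p ε ≤ expectation (ε, s) (fun ε' => ind (Sat φ ε' η))

/-- Disjunction `φ₁ ∨ φ₂ := ¬(¬φ₁ ∧ ¬φ₂)`. -/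
def Formula.disj (φ₁ φ₂ : Formula) : Formula := .neg (.conj (.neg φ₁) (.neg φ₂))

/-- Existential quantification `∃l·φ := ¬∀l·¬φ`. -/
def Formula.ex (l : String) (φ : Formula) : Formula := .neg (.all l (.neg φ))

/-- A program is purely probabilistic if it contains no demonic choice. -/
def DemFree : Stmt → Prop
  | .skip => True
  | .assign _ _ => True
  | .seq s₁ s₂ => DemFree s₁ ∧ DemFree s₂
  | .dem _ _ => False
  | .prob _ s₁ s₂ => DemFree s₁ ∧ DemFree s₂
  | .ifte _ s₁ s₂ => DemFree s₁ ∧ DemFree s₂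
  | .whileLoop _ s => DemFree s

end PGCL

open PGCL

namespace PGCL

instance : Inhabited PGCL.Stmt := ⟨PGCL.Stmt.skip⟩

variable {π : Policy}

lemma Step.nonneg {σ σ' : PState} {p : ℝ} (h : Step π σ p σ') : 0 ≤ p := by
  induction h with
  | assign => exact zero_le_one
  | seqSkip _ ih => exact ih
  | seqStep _ ih => exact ih
  | probL h0 _ => exact h0
  | probR _ h1 => linarith
  | demL _ => exact zero_le_one
  | demR _ => exact zero_le_one
  | iteT _ => exact zero_le_one
  | iteF _ => exact zero_le_one
  | whileT _ => exact zero_le_one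
  | whileF _ => exact zero_le_one

lemma no_step_skip {ε : PVal} {p : ℝ} {σ' : PState}
    (h : Step π (ε, Stmt.skip) p σ') : False := by
  obtain ⟨ε', s'⟩ := σ'
  cases h

/-- auxiliary: strip the first component of a `seq`. -/
def unseq : Stmt → Stmt
  | .seq a _ => a
  | t => t

lemma step_seq_inv {ε : PVal} {p : ℝ} {σ' : PState} {s₁ s₂ : Stmt}
    (hs : s₁ ≠ Stmt.skip) (h : Step π (ε, Stmt.seq s₁ s₂) p σ') :
    ∃ ε' t, σ' = (ε', Stmt.seq t s₂) ∧ Step π (ε, s₁) p (ε', t) := by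
  obtain ⟨εx, sx⟩ := σ'
  cases h with
  | seqSkip h' => exact absurd rfl hs
  | seqStep h' => exact ⟨_, _, rfl, h'⟩

lemma sum_fst_le_of_subset_singleton {E : Finset (ℝ × PState)} {x : ℝ × PState}
    (hE : E ⊆ {x}) (h0 : 0 ≤ x.1) (h1 : x.1 ≤ 1) : ∑ e ∈ E, e.1 ≤ 1 := by
  rcases Finset.subset_singleton_iff.1 hE with rfl | rfl
  · simp
  · simpa using h1

lemma edge_sum_le_one : ∀ (s : Stmt) (ε : PVal) (E : Finset (ℝ × PState)),
    (∀ e ∈ E, Step π (ε, s) e.1 e.2) → ∑ e ∈ E, e.1 ≤ 1 := by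
  intro s
  induction s with
  | skip =>
    intro ε E hE
    have : E = ∅ := Finset.eq_empty_of_forall_notMem fun e he =>
      no_step_skip (hE e he)
    simp [this]
  | assign x e =>
    intro ε E hE
    refine sum_fst_le_of_subset_singleton (x := (1, (Function.update ε x (e ε), Stmt.skip)))
      (fun a ha => ?_) zero_le_one le_rfl
    obtain ⟨ap, aε, as⟩ := a
    have h := hE _ ha
    cases h
    exact Finset.mem_singleton_self _
  | seq s₁ s₂ ih₁ ih₂ =>
    intro ε E hE
    by_cases hs : s₁ = Stmt.skip
    · subst hs
      refine ih₂ ε E fun a ha => ?_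
      obtain ⟨ap, aε, as⟩ := a
      have h := hE _ ha
      cases h with
      | seqSkip h' => exact h'
      | seqStep h' => exact absurd h' no_step_skip
    · classical
      set g : ℝ × PState → ℝ × PState := fun e => (e.1, (e.2.1, unseq e.2.2)) with hg
      have hinj : ∀ a ∈ E, ∀ b ∈ E, g a = g b → a = b := by
        intro a ha b hb hab
        obtain ⟨εa, ta, hsa, _⟩ := step_seq_inv hs (hE a ha)
        obtain ⟨εb, tb, hsb, _⟩ := step_seq_inv hs (hE b hb)
        have ha2 : a = (a.1, (εa, Stmt.seq ta s₂)) := by rw [← hsa]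
        have hb2 : b = (b.1, (εb, Stmt.seq tb s₂)) := by rw [← hsb]
        rw [ha2, hb2]
        rw [ha2, hb2] at hab
        simp only [hg, unseq, Prod.mk.injEq] at hab
        obtain ⟨h1, h2, h3⟩ := hab
        exact Prod.ext h1 (Prod.ext h2 (by rw [h3]))
      have hmaps : ∀ e' ∈ E.image g, Step π (ε, s₁) e'.1 e'.2 := by
        intro e' he'
        obtain ⟨a, ha, rfl⟩ := Finset.mem_image.1 he'
        obtain ⟨εa, ta, hsa, hstep⟩ := step_seq_inv hs (hE a ha)
        have : g a = (a.1, (εa, ta)) := by simp [hg, hsa, unseq]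
        rw [this]
        exact hstep
      have hle := ih₁ ε (E.image g) hmaps
      rw [Finset.sum_image hinj] at hle
      simpa [hg] using hle
  | dem s₁ s₂ ih₁ ih₂ =>
    intro ε E hE
    by_cases hπ : π (ε, Stmt.dem s₁ s₂) = true
    · refine sum_fst_le_of_subset_singleton (x := (1, (ε, s₁)))
        (fun a ha => ?_) zero_le_one le_rfl
      obtain ⟨ap, aε, as⟩ := a
      have h := hE _ ha
      cases h with
      | demL _ => exact Finset.mem_singleton_self _
      | demR hf => rw [hπ] at hf; cases hf
    · refine sum_fst_le_of_subset_singleton (x := (1, (ε, s₂)))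
        (fun a ha => ?_) zero_le_one le_rfl
      obtain ⟨ap, aε, as⟩ := a
      have h := hE _ ha
      cases h with
      | demL ht => exact absurd ht hπ
      | demR _ => exact Finset.mem_singleton_self _
  | prob e s₁ s₂ ih₁ ih₂ =>
    intro ε E hE
    classical
    rcases E.eq_empty_or_nonempty with rfl | ⟨a0, ha0⟩
    · simp
    have hbounds : 0 ≤ e ε ∧ e ε ≤ 1 := by
      obtain ⟨ap, aε, as⟩ := a0
      have h := hE _ ha0
      cases h with
      | probL h0 h1 => exact ⟨h0, h1⟩
      | probR h0 h1 => exact ⟨h0, h1⟩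
    obtain ⟨hb0, hb1⟩ := hbounds
    set A : ℝ × PState := (e ε, (ε, s₁)) with hA
    set B : ℝ × PState := (1 - e ε, (ε, s₂)) with hB
    have hsub : E ⊆ {A, B} := by
      intro a ha
      obtain ⟨ap, aε, as⟩ := a
      have h := hE _ ha
      cases h with
      | probL h0 h1 => exact Finset.mem_insert_self _ _
      | probR h0 h1 => exact Finset.mem_insert_of_mem (Finset.mem_singleton_self _)
    calc ∑ x ∈ E, x.1 ≤ ∑ x ∈ ({A, B} : Finset (ℝ × PState)), x.1 := by
          refine Finset.sum_le_sum_of_subset_of_nonneg hsub fun x hx _ => ?_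
          simp only [Finset.mem_insert, Finset.mem_singleton] at hx
          rcases hx with rfl | rfl
          · exact hb0
          · simp only [hB]; linarith
      _ ≤ 1 := by
          by_cases hab : A = B
          · rw [hab]
            simp only [Finset.insert_eq_self.2 (Finset.mem_singleton_self B),
              Finset.sum_singleton, hB]
            simp only [Finset.mem_singleton, Finset.insert_eq_of_mem, Finset.sum_singleton]
            linarith
          · rw [Finset.sum_insert (by simpa using hab)]
            simp only [hA, hB, Finset.sum_singleton]
            linarith
  | ifte e s₁ s₂ ih₁ ih₂ =>
    intro ε E hE
    by_cases he : e ε = true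
    · refine sum_fst_le_of_subset_singleton (x := (1, (ε, s₁)))
        (fun a ha => ?_) zero_le_one le_rfl
      obtain ⟨ap, aε, as⟩ := a
      have h := hE _ ha
      cases h with
      | iteT _ => exact Finset.mem_singleton_self _
      | iteF hf => rw [he] at hf; cases hf
    · refine sum_fst_le_of_subset_singleton (x := (1, (ε, s₂)))
        (fun a ha => ?_) zero_le_one le_rfl
      obtain ⟨ap, aε, as⟩ := a
      have h := hE _ ha
      cases h with
      | iteT ht => exact absurd ht he
      | iteF _ => exact Finset.mem_singleton_self _
  | whileLoop e s ih =>
    intro ε E hE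
    by_cases he : e ε = true
    · refine sum_fst_le_of_subset_singleton (x := (1, (ε, Stmt.seq s (Stmt.whileLoop e s))))
        (fun a ha => ?_) zero_le_one le_rfl
      obtain ⟨ap, aε, as⟩ := a
      have h := hE _ ha
      cases h with
      | whileT _ => exact Finset.mem_singleton_self _
      | whileF hf => rw [he] at hf; cases hf
    · refine sum_fst_le_of_subset_singleton (x := (1, (ε, Stmt.skip)))
        (fun a ha => ?_) zero_le_one le_rfl
      obtain ⟨ap, aε, as⟩ := a
      have h := hE _ ha
      cases h with
      | whileT ht => exact absurd ht he
      | whileF _ => exact Finset.mem_singleton_self _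

/-- Traces: lists of (probability, next-state) pairs realizable from a state. -/
inductive Trace (π : Policy) : PState → List (ℝ × PState) → Prop
  | nil (ε : PVal) : Trace π (ε, Stmt.skip) []
  | cons {σ σ' : PState} {L : List (ℝ × PState)} {p : ℝ} :
      Step π σ p σ' → Trace π σ' L → Trace π σ ((p, σ') :: L)

/-- Probability of a trace. -/
noncomputable def lprob : List (ℝ × PState) → ℝ
  | [] => 1
  | e :: L => e.1 * lprob L

lemma trace_nil_inv {σ : PState} (h : Trace π σ []) : σ.2 = Stmt.skip := by
  cases h; rfl

lemma trace_cons_inv {σ : PState} {a : ℝ × PState} {L : List (ℝ × PState)}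
    (h : Trace π σ (a :: L)) : Step π σ a.1 a.2 ∧ Trace π a.2 L := by
  cases h with
  | cons hst ht => exact ⟨hst, ht⟩

lemma trace_skip {ε : PVal} {L : List (ℝ × PState)}
    (h : Trace π (ε, Stmt.skip) L) : L = [] := by
  cases h with
  | nil => rfl
  | cons hst _ => exact absurd hst no_step_skip

lemma lprob_nonneg {σ : PState} {L : List (ℝ × PState)} (h : Trace π σ L) :
    0 ≤ lprob L := by
  induction L generalizing σ with
  | nil => simp [lprob]
  | cons a L ih =>
    obtain ⟨hst, ht⟩ := trace_cons_inv h
    exact mul_nonneg hst.nonneg (ih ht)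

lemma trace_sum_le_one : ∀ (n : ℕ) (σ : PState) (S : Finset (List (ℝ × PState))),
    (∀ L ∈ S, Trace π σ L ∧ L.length ≤ n) → ∑ L ∈ S, lprob L ≤ 1 := by
  intro n
  induction n with
  | zero =>
    intro σ S hS
    have hsub : S ⊆ {[]} := by
      intro L hL
      have := (hS L hL).2
      simp only [Finset.mem_singleton]
      exact List.length_eq_zero_iff.1 (Nat.le_zero.1 this)
    rcases Finset.subset_singleton_iff.1 hsub with rfl | rfl
    · simp
    · simp [lprob]
  | succ n ih =>
    intro σ S hS
    classical
    by_cases hσ : σ.2 = Stmt.skip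
    · obtain ⟨ε, s⟩ := σ
      simp only at hσ
      subst hσ
      have hsub : S ⊆ {[]} := by
        intro L hL
        simp only [Finset.mem_singleton]
        exact trace_skip (hS L hL).1
      rcases Finset.subset_singleton_iff.1 hsub with rfl | rfl
      · simp
      · simp [lprob]
    · -- no trace in S is empty
      have hne : ∀ L ∈ S, L ≠ [] := by
        intro L hL hnil
        exact hσ (trace_nil_inv (hnil ▸ (hS L hL).1))
      set hd : List (ℝ × PState) → ℝ × PState := fun L => L.headI with hhd
      set E : Finset (ℝ × PState) := S.image hd with hEdef
      have hmaps : ∀ L ∈ S, hd L ∈ E := fun L hL => Finset.mem_image_of_mem hd hL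
      rw [← Finset.sum_fiberwise_of_maps_to hmaps lprob]
      have hEstep : ∀ e ∈ E, Step π σ e.1 e.2 := by
        intro e he
        obtain ⟨L, hL, rfl⟩ := Finset.mem_image.1 he
        obtain ⟨a, L', rfl⟩ := List.exists_cons_of_ne_nil (hne L hL)
        exact (trace_cons_inv (hS _ hL).1).1
      calc ∑ e ∈ E, ∑ L ∈ S.filter (fun L => hd L = e), lprob L
          ≤ ∑ e ∈ E, e.1 * 1 := by
            refine Finset.sum_le_sum fun e he => ?_
            -- inner fiber: all lists are e :: tail
            have htail_inj : ∀ L ∈ S.filter (fun L => hd L = e),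
                ∀ M ∈ S.filter (fun L => hd L = e), L.tail = M.tail → L = M := by
              intro L hL M hM htl
              obtain ⟨hLS, hLhd⟩ := Finset.mem_filter.1 hL
              obtain ⟨hMS, hMhd⟩ := Finset.mem_filter.1 hM
              obtain ⟨a, L', rfl⟩ := List.exists_cons_of_ne_nil (hne L hLS)
              obtain ⟨b, M', rfl⟩ := List.exists_cons_of_ne_nil (hne M hMS)
              simp only [hhd, List.headI] at hLhd hMhd
              simp only [List.tail] at htl
              rw [hLhd, hMhd, htl]
            have hsum : ∑ L ∈ S.filter (fun L => hd L = e), lprob L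
                = e.1 * ∑ T ∈ (S.filter (fun L => hd L = e)).image List.tail, lprob T := by
              rw [Finset.sum_image htail_inj, Finset.mul_sum]
              refine Finset.sum_congr rfl fun L hL => ?_
              obtain ⟨hLS, hLhd⟩ := Finset.mem_filter.1 hL
              obtain ⟨a, L', rfl⟩ := List.exists_cons_of_ne_nil (hne L hLS)
              simp only [hhd, List.headI] at hLhd
              simp [lprob, List.tail, hLhd]
            rw [hsum]
            have htails : ∀ T ∈ (S.filter (fun L => hd L = e)).image List.tail,
                Trace π e.2 T ∧ T.length ≤ n := by
              intro T hT
              obtain ⟨L, hL, rfl⟩ := Finset.mem_image.1 hT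
              obtain ⟨hLS, hLhd⟩ := Finset.mem_filter.1 hL
              obtain ⟨a, L', rfl⟩ := List.exists_cons_of_ne_nil (hne L hLS)
              simp only [hhd, List.headI] at hLhd
              obtain ⟨hT1, hT2⟩ := hS _ hLS
              subst hLhd
              refine ⟨(trace_cons_inv hT1).2, ?_⟩
              simp only [List.length_cons, List.tail_cons] at hT2 ⊢
              omega
            have := ih e.2 _ htails
            have he1 : 0 ≤ e.1 := (hEstep e he).nonneg
            exact mul_le_mul_of_nonneg_left this he1
        _ = ∑ e ∈ E, e.1 := by simp
        _ ≤ 1 := by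
            obtain ⟨ε, s⟩ := σ
            exact edge_sum_le_one s ε E hEstep

/-- The trace of a path. -/
def MPath.toList : {σ : PState} → MPath π σ → List (ℝ × PState)
  | _, .nil _ => []
  | _, .cons (σ' := σ') p _ rest => (p, σ') :: rest.toList

lemma MPath.toList_trace {σ : PState} (ρ : MPath π σ) : Trace π σ ρ.toList := by
  induction ρ with
  | nil ε => exact Trace.nil ε
  | cons p h rest ih => exact Trace.cons h ih

lemma MPath.prob_eq_lprob {σ : PState} (ρ : MPath π σ) : ρ.prob = lprob ρ.toList := by
  induction ρ with
  | nil ε => rfl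
  | cons p h rest ih => simp [MPath.prob, MPath.toList, lprob, ih]

lemma MPath.toList_injective {σ : PState} :
    Function.Injective (MPath.toList (π := π) (σ := σ)) := by
  intro ρ₁
  induction ρ₁ with
  | nil ε =>
    intro ρ₂ h
    cases ρ₂ with
    | nil => rfl
    | cons p hst rest => simp [MPath.toList] at h
  | cons p hst rest ih =>
    intro ρ₂ h
    cases ρ₂ with
    | nil => simp [MPath.toList] at h
    | cons p' hst' rest' =>
      simp only [MPath.toList, List.cons.injEq, Prod.mk.injEq] at h
      obtain ⟨⟨hp, hσ⟩, hL⟩ := h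
      subst hp
      subst hσ
      rw [ih hL]

lemma MPath.prob_nonneg {σ : PState} (ρ : MPath π σ) : 0 ≤ ρ.prob := by
  rw [ρ.prob_eq_lprob]
  exact lprob_nonneg ρ.toList_trace

lemma path_sum_le_one {σ : PState} (S : Finset (MPath π σ)) :
    ∑ ρ ∈ S, ρ.prob ≤ 1 := by
  classical
  have h1 : ∑ ρ ∈ S, ρ.prob = ∑ L ∈ S.image MPath.toList, lprob L := by
    rw [Finset.sum_image fun a _ b _ hab => MPath.toList_injective hab]
    exact Finset.sum_congr rfl fun ρ _ => ρ.prob_eq_lprob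
  rw [h1]
  refine trace_sum_le_one (π := π) ((S.image MPath.toList).sup List.length) σ _ fun L hL => ?_
  obtain ⟨ρ, hρ, rfl⟩ := Finset.mem_image.1 hL
  exact ⟨ρ.toList_trace, Finset.le_sup hL⟩

lemma summable_prob (π : Policy) (σ : PState) :
    Summable fun ρ : MPath π σ => ρ.prob :=
  summable_of_sum_le (fun ρ => ρ.prob_nonneg) fun _ => path_sum_le_one _

lemma summable_reward (π : Policy) (σ : PState) {r : PVal → ℝ}
    (h0 : ∀ ε, 0 ≤ r ε) (h1 : ∀ ε, r ε ≤ 1) :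
    Summable fun ρ : MPath π σ => ρ.prob * r ρ.finalVal := by
  refine (summable_prob π σ).of_nonneg_of_le
    (fun ρ => mul_nonneg ρ.prob_nonneg (h0 _)) fun ρ => ?_
  calc ρ.prob * r ρ.finalVal ≤ ρ.prob * 1 :=
        mul_le_mul_of_nonneg_left (h1 _) ρ.prob_nonneg
    _ = ρ.prob := mul_one _

lemma expReward_nonneg (π : Policy) (σ : PState) {r : PVal → ℝ}
    (h0 : ∀ ε, 0 ≤ r ε) : 0 ≤ expReward π σ r :=
  tsum_nonneg fun ρ => mul_nonneg ρ.prob_nonneg (h0 _)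

lemma expectation_mono {σ : PState} {r₁ r₂ : PVal → ℝ}
    (h10 : ∀ ε, 0 ≤ r₁ ε) (h11 : ∀ ε, r₁ ε ≤ 1)
    (h20 : ∀ ε, 0 ≤ r₂ ε) (h21 : ∀ ε, r₂ ε ≤ 1)
    (hle : ∀ ε, r₁ ε ≤ r₂ ε) :
    expectation σ r₁ ≤ expectation σ r₂ := by
  refine le_ciInf fun π => ?_
  have h1 : expectation σ r₁ ≤ expReward π σ r₁ := by
    refine ciInf_le ⟨0, ?_⟩ π
    rintro x ⟨π', rfl⟩
    exact expReward_nonneg π' σ h10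
  refine h1.trans ?_
  exact Summable.tsum_le_tsum
    (fun ρ => mul_le_mul_of_nonneg_left (hle _) ρ.prob_nonneg)
    (summable_reward π σ h10 h11) (summable_reward π σ h20 h21)

lemma ind_nonneg (P : Prop) : 0 ≤ ind P := by
  unfold ind; split <;> norm_num

lemma ind_le_one (P : Prop) : ind P ≤ 1 := by
  unfold ind; split <;> norm_num

lemma ind_mono {P Q : Prop} (h : P → Q) : ind P ≤ ind Q := by
  by_cases hP : P
  · by_cases hQ : Q
    · simp [ind, hP, hQ]
    · exact absurd (h hP) hQ
  · simp only [ind, if_neg hP]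
    exact ind_nonneg Q

end PGCL

/-- Weakening conjunctions. -/
theorem weakening_conjunctions (ε : PVal) (η : LEnv) (s : Stmt) (φ₁ φ₂ : Formula)
    (p : PVal → ℝ) (hp : ∀ ε', p ε' ∈ Set.Icc (0 : ℝ) 1)
    (h : Sat (.box s p (.conj φ₁ φ₂)) ε η) :
    Sat (.box s p φ₁) ε η ∧ Sat (.box s p φ₂) ε η := by
  simp only [Sat] at h ⊢
  refine ⟨h.trans ?_, h.trans ?_⟩
  · exact expectation_mono (fun _ => ind_nonneg _) (fun _ => ind_le_one _)
      (fun _ => ind_nonneg _) (fun _ => ind_le_one _)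
      (fun ε' => ind_mono fun hc => hc.1)
  · exact expectation_mono (fun _ => ind_nonneg _) (fun _ => ind_le_one _)
      (fun _ => ind_nonneg _) (fun _ => ind_le_one _)
      (fun ε' => ind_mono fun hc => hc.2)
end

section
/- Universal quantifier commutes out of the p-box: for every valuation ε, pGCL program s, well-formed pDL formula φ, logical variable l, and expectation lower bound p, if ε ⊨ [s]_p (∀l·φ) then ε ⊨ ∀l·[s]_p φ (i.e., ε ⊨ ([s]_p φ)[l:=v] for every v in the domain of l). -/
open PGCL

section AuxForallBox

open PGCL

attribute [local instance] Classical.propDecidable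

lemma PGCL.step_nonneg {π : Policy} {σ : PState} {p : ℝ} {σ' : PState}
    (h : Step π σ p σ') : 0 ≤ p := by
  induction h with
  | probL h0 h1 => exact h0
  | probR h0 h1 => linarith
  | seqSkip _ ih => exact ih
  | seqStep _ ih => exact ih
  | _ => norm_num

lemma PGCL.mpath_prob_nonneg {π : Policy} {σ : PState} (ρ : MPath π σ) :
    0 ≤ ρ.prob := by
  induction ρ with
  | nil => simp [MPath.prob]
  | cons p h rest ih => exact mul_nonneg (PGCL.step_nonneg h) ih

/-- length of a path -/
def PGCL.plen {π : Policy} : {σ : PState} → MPath π σ → ℕ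
  | _, .nil _ => 0
  | _, .cons _ _ rest => PGCL.plen rest + 1

open Classical in
/-- overapproximation of the successors of a state, with their probabilities -/
noncomputable def PGCL.succsS (π : Policy) (ε : PVal) : Stmt → Finset (ℝ × PState)
  | .skip => ∅
  | .assign x e => {(1, (Function.update ε x (e ε), Stmt.skip))}
  | .seq s₁ s =>
      (if s₁ = Stmt.skip then PGCL.succsS π ε s else ∅) ∪
        (PGCL.succsS π ε s₁).image (fun x => (x.1, (x.2.1, Stmt.seq x.2.2 s)))
  | .dem s₁ s₂ => {(1, (ε, if π (ε, Stmt.dem s₁ s₂) then s₁ else s₂))}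
  | .prob e s₁ s₂ =>
      if 0 ≤ e ε ∧ e ε ≤ 1 then {(e ε, (ε, s₁)), (1 - e ε, (ε, s₂))} else ∅
  | .ifte e s₁ s₂ => {(1, (ε, if e ε then s₁ else s₂))}
  | .whileLoop e s =>
      {(1, (ε, if e ε then Stmt.seq s (Stmt.whileLoop e s) else Stmt.skip))}

lemma PGCL.step_mem_succsS {π : Policy} {σ : PState} {p : ℝ} {σ' : PState}
    (h : Step π σ p σ') : (p, σ') ∈ PGCL.succsS π σ.1 σ.2 := by
  induction h with
  | assign => simp [PGCL.succsS]
  | seqSkip h ih =>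
      simp only [PGCL.succsS, Finset.mem_union, if_true]
      exact Or.inl (by simpa using ih)
  | @seqStep ε ε' s₁ s₂ s pp h ih =>
      simp only [PGCL.succsS, Finset.mem_union]
      right
      exact Finset.mem_image.2 ⟨(pp, (ε', s₂)), ih, rfl⟩
  | demL hπ => simp [PGCL.succsS, hπ]
  | demR hπ => simp [PGCL.succsS, hπ]
  | probL h0 h1 => simp [PGCL.succsS, h0, h1]
  | probR h0 h1 => simp [PGCL.succsS, h0, h1]
  | iteT he => simp [PGCL.succsS, he]
  | iteF he => simp [PGCL.succsS, he]
  | whileT he => simp [PGCL.succsS, he]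
  | whileF he => simp [PGCL.succsS, he]

lemma PGCL.succsS_nonneg {π : Policy} {ε : PVal} (s : Stmt) :
    ∀ x ∈ PGCL.succsS π ε s, 0 ≤ x.1 := by
  induction s with
  | skip => simp [PGCL.succsS]
  | assign x e => simp [PGCL.succsS]
  | seq s₁ s ih1 ih2 =>
      intro x hx
      simp only [PGCL.succsS, Finset.mem_union] at hx
      rcases hx with hx | hx
      · by_cases hs : s₁ = Stmt.skip
        · rw [if_pos hs] at hx; exact ih2 x hx
        · rw [if_neg hs] at hx; simp at hx
      · rcases Finset.mem_image.1 hx with ⟨y, hy, rfl⟩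
        exact ih1 y hy
  | dem s₁ s₂ ih1 ih2 => simp [PGCL.succsS]
  | prob e s₁ s₂ ih1 ih2 =>
      intro x hx
      simp only [PGCL.succsS] at hx
      split_ifs at hx with hc
      · rcases Finset.mem_insert.1 hx with rfl | hx
        · exact hc.1
        · rcases Finset.mem_singleton.1 hx with rfl
          simp only []
          linarith [hc.2]
      · simp at hx
  | ifte e s₁ s₂ ih1 ih2 => simp [PGCL.succsS]
  | whileLoop e s ih => simp [PGCL.succsS]

lemma PGCL.succsS_sum_le_one {π : Policy} {ε : PVal} (s : Stmt) :
    ∑ x ∈ PGCL.succsS π ε s, x.1 ≤ 1 := by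
  induction s with
  | skip => simp [PGCL.succsS]
  | assign x e => simp [PGCL.succsS]
  | seq s₁ s ih1 ih2 =>
      by_cases hs : s₁ = Stmt.skip
      · subst hs
        simpa [PGCL.succsS] using ih2
      · simp only [PGCL.succsS, if_neg hs, Finset.empty_union]
        rw [Finset.sum_image]
        · exact ih1
        · intro a _ b _ hab
          simp only [Prod.mk.injEq, Stmt.seq.injEq] at hab
          exact Prod.ext hab.1 (Prod.ext hab.2.1 hab.2.2.1)
  | dem s₁ s₂ ih1 ih2 => simp [PGCL.succsS]
  | prob e s₁ s₂ ih1 ih2 =>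
      simp only [PGCL.succsS]
      split_ifs with hc
      · by_cases heq : ((e ε, (ε, s₁)) : ℝ × PState) = (1 - e ε, (ε, s₂))
        · rw [heq, Finset.insert_eq_self.2 (Finset.mem_singleton_self _),
            Finset.sum_singleton]
          show 1 - e ε ≤ 1
          linarith [hc.1]
        · rw [Finset.sum_pair heq]; simp
      · simp
  | ifte e s₁ s₂ ih1 ih2 => simp [PGCL.succsS]
  | whileLoop e s ih => simp [PGCL.succsS]

end AuxForallBox

section AuxForallBox2

open PGCL

attribute [local instance] Classical.propDecidable

lemma PGCL.no_step_skip_s6 {π : Policy} {ε : PVal} {p : ℝ} {σ' : PState}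
    (h : Step π (ε, Stmt.skip) p σ') : False := by cases h

lemma PGCL.skip_path {π : Policy} {ε : PVal} (ρ : MPath π (ε, Stmt.skip)) :
    ρ = MPath.nil ε := by
  cases ρ with
  | nil => rfl
  | cons p h rest => exact absurd h (fun h => PGCL.no_step_skip_s6 h)

open Classical in
noncomputable def PGCL.tailAt {π : Policy} {σ : PState} (x : ℝ × PState) :
    MPath π σ → Option (MPath π x.2)
  | .nil _ => none
  | @MPath.cons _ _ σ' p h rest =>
      if hx : x = (p, σ') then some (cast (by rw [hx]) rest) else none

lemma PGCL.tailAt_nil {π : Policy} {ε : PVal} (x : ℝ × PState) :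
    PGCL.tailAt (π := π) x (MPath.nil ε) = none := rfl

lemma PGCL.tailAt_cons {π : Policy} {σ σ₁ : PState} (x : ℝ × PState) (p : ℝ)
    (hs : Step π σ p σ₁) (rest : MPath π σ₁) :
    PGCL.tailAt x (MPath.cons p hs rest)
      = if hx : x = (p, σ₁) then some (cast (by rw [hx]) rest) else none := rfl

lemma PGCL.tailAt_cons_self {π : Policy} {σ σ₁ : PState} (p : ℝ)
    (hs : Step π σ p σ₁) (rest : MPath π σ₁) :
    PGCL.tailAt ((p, σ₁)) (MPath.cons p hs rest) = some rest := by
  rw [PGCL.tailAt_cons, dif_pos rfl]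
  exact congrArg some (cast_eq_iff_heq.2 HEq.rfl)

lemma PGCL.tailAt_cons_some {π : Policy} {σ σ₁ : PState} {x : ℝ × PState} {p : ℝ}
    {hs : Step π σ p σ₁} {rest : MPath π σ₁} {t : MPath π x.2}
    (h : PGCL.tailAt x (MPath.cons p hs rest) = some t) :
    x = (p, σ₁) ∧ HEq t rest := by
  rw [PGCL.tailAt_cons] at h
  split at h
  · rename_i hx
    refine ⟨hx, ?_⟩
    obtain rfl : t = _ := (Option.some.injEq _ _ ▸ h).symm
    exact cast_heq _ rest
  · exact absurd h (by simp)

lemma PGCL.tailAt_inj {π : Policy} {σ : PState} (x : ℝ × PState) :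
    ∀ (ρ ρ' : MPath π σ), ∀ t ∈ PGCL.tailAt x ρ, t ∈ PGCL.tailAt x ρ' → ρ = ρ' := by
  intro ρ ρ' t h1 h2
  rw [Option.mem_def] at h1 h2
  cases ρ with
  | nil => simp [PGCL.tailAt_nil] at h1
  | @cons _ σ₁ p hstep rest =>
    cases ρ' with
    | nil => simp [PGCL.tailAt_nil] at h2
    | @cons _ σ₂ p' hstep' rest' =>
      obtain ⟨hx1, ht1⟩ := PGCL.tailAt_cons_some h1
      obtain ⟨hx2, ht2⟩ := PGCL.tailAt_cons_some h2
      obtain ⟨hp, hσ⟩ := Prod.mk.injEq .. ▸ (hx1.symm.trans hx2)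
      subst hp; subst hσ
      obtain rfl : rest = rest' := eq_of_heq (ht1.symm.trans ht2)
      rfl

noncomputable def PGCL.tails {π : Policy} {σ : PState} (x : ℝ × PState)
    (F : Finset (MPath π σ)) : Finset (MPath π x.2) :=
  F.filterMap (PGCL.tailAt x) (PGCL.tailAt_inj x)

lemma PGCL.mem_tails {π : Policy} {σ : PState} {x : ℝ × PState}
    {F : Finset (MPath π σ)} {t : MPath π x.2} :
    t ∈ PGCL.tails x F ↔ ∃ ρ ∈ F, PGCL.tailAt x ρ = some t := by
  unfold PGCL.tails
  rw [Finset.mem_filterMap]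

lemma PGCL.tailAt_plen {π : Policy} {σ : PState} {x : ℝ × PState}
    {ρ : MPath π σ} {t : MPath π x.2} (h : PGCL.tailAt x ρ = some t) :
    PGCL.plen ρ = PGCL.plen t + 1 := by
  cases ρ with
  | nil => simp [PGCL.tailAt_nil] at h
  | @cons _ σ₁ p hstep rest =>
    obtain ⟨hx, ht⟩ := PGCL.tailAt_cons_some h
    subst hx
    obtain rfl : t = rest := eq_of_heq ht
    rfl

lemma PGCL.tails_insert_sum {π : Policy} {σ σ₁ : PState} (x : ℝ × PState) (p : ℝ)
    (hs : Step π σ p σ₁) (rest : MPath π σ₁) (F : Finset (MPath π σ))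
    (hρ : MPath.cons p hs rest ∉ F) :
    ∑ t ∈ PGCL.tails x (insert (MPath.cons p hs rest) F), t.prob
      = (∑ t ∈ PGCL.tails x F, t.prob)
        + (if x = (p, σ₁) then rest.prob else 0) := by
  by_cases hx : x = (p, σ₁)
  · subst hx
    rw [if_pos rfl]
    have hset : PGCL.tails ((p : ℝ), σ₁) (insert (MPath.cons p hs rest) F)
        = insert rest (PGCL.tails ((p : ℝ), σ₁) F) := by
      ext t
      rw [PGCL.mem_tails, Finset.mem_insert, PGCL.mem_tails]
      constructor
      · rintro ⟨ρ, hρ', ht⟩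
        rcases Finset.mem_insert.1 hρ' with rfl | hρ'
        · left
          rw [PGCL.tailAt_cons_self] at ht
          exact (Option.some.injEq _ _ ▸ ht).symm
        · right; exact ⟨ρ, hρ', ht⟩
      · rintro (ht | ⟨ρ, hρ', ht⟩)
        · exact ⟨MPath.cons p hs rest, Finset.mem_insert_self _ _,
            by rw [ht]; exact PGCL.tailAt_cons_self p hs rest⟩
        · exact ⟨ρ, Finset.mem_insert_of_mem hρ', ht⟩
    rw [hset, Finset.sum_insert, add_comm]
    intro hmem
    rcases PGCL.mem_tails.1 hmem with ⟨ρ, hρ', ht⟩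
    have : ρ = MPath.cons p hs rest :=
      PGCL.tailAt_inj ((p : ℝ), σ₁) ρ (MPath.cons p hs rest) rest (Option.mem_def.2 ht)
        (Option.mem_def.2 (PGCL.tailAt_cons_self p hs rest))
    exact hρ (this ▸ hρ')
  · rw [if_neg hx, add_zero]
    congr 1
    ext t
    rw [PGCL.mem_tails, PGCL.mem_tails]
    constructor
    · rintro ⟨ρ, hρ', ht⟩
      rcases Finset.mem_insert.1 hρ' with rfl | hρ'
      · exact absurd (PGCL.tailAt_cons_some ht).1 hx
      · exact ⟨ρ, hρ', ht⟩
    · rintro ⟨ρ, hρ', ht⟩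
      exact ⟨ρ, Finset.mem_insert_of_mem hρ', ht⟩

lemma PGCL.skip_sum_le_one {π : Policy} {ε : PVal}
    (F : Finset (MPath π (ε, Stmt.skip))) : ∑ ρ ∈ F, ρ.prob ≤ 1 := by
  have hsub : F ⊆ {(MPath.nil ε : MPath π (ε, Stmt.skip))} :=
    fun ρ hρ => Finset.mem_singleton.2 (PGCL.skip_path ρ)
  rcases Finset.subset_singleton_iff.1 hsub with h | h <;> simp [h, MPath.prob]

lemma PGCL.sum_prob_le_one {π : Policy} :
    ∀ (n : ℕ) (σ : PState) (F : Finset (MPath π σ)),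
      (∀ ρ ∈ F, PGCL.plen ρ ≤ n) → ∑ ρ ∈ F, ρ.prob ≤ 1 := by
  intro n
  induction n with
  | zero =>
    intro σ F hF
    obtain ⟨ε, s⟩ := σ
    by_cases hs : s = Stmt.skip
    · subst hs
      exact PGCL.skip_sum_le_one F
    · have : F = ∅ := by
        apply Finset.eq_empty_of_forall_notMem
        intro ρ hρ
        cases ρ with
        | nil => exact hs rfl
        | cons p h rest => simpa [PGCL.plen] using hF _ hρ
      simp [this]
  | succ n ih =>
    intro σ F hF
    obtain ⟨ε, s⟩ := σ
    by_cases hs : s = Stmt.skip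
    · subst hs
      exact PGCL.skip_sum_le_one F
    · have key : ∀ (G : Finset (MPath π (ε, s))), (∀ ρ ∈ G, PGCL.plen ρ ≤ n + 1) →
          ∑ ρ ∈ G, ρ.prob
            ≤ ∑ x ∈ PGCL.succsS π ε s, x.1 * ∑ t ∈ PGCL.tails x G, t.prob := by
        intro G
        induction G using Finset.induction with
        | empty => simp [PGCL.tails]
        | @insert ρ₀ G hρ₀ ihG =>
          intro hlen
          cases ρ₀ with
          | nil => exact absurd rfl hs
          | @cons _ σ₁ p hstep rest =>
            rw [Finset.sum_insert hρ₀]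
            have hrw : ∀ x ∈ PGCL.succsS π ε s,
                x.1 * ∑ t ∈ PGCL.tails x (insert (MPath.cons p hstep rest) G), t.prob
                  = x.1 * ∑ t ∈ PGCL.tails x G, t.prob
                    + (if x = (p, σ₁) then x.1 * rest.prob else 0) := by
              intro x hx
              rw [PGCL.tails_insert_sum x p hstep rest G hρ₀, mul_add, mul_ite, mul_zero]
            rw [Finset.sum_congr rfl hrw, Finset.sum_add_distrib]
            have hite : ∑ x ∈ PGCL.succsS π ε s,
                (if x = (p, σ₁) then x.1 * rest.prob else 0) = p * rest.prob := by
              rw [Finset.sum_ite_eq' (PGCL.succsS π ε s) ((p : ℝ), σ₁)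
                (fun x => x.1 * rest.prob)]
              rw [if_pos (PGCL.step_mem_succsS hstep)]
            rw [hite]
            have h1 : MPath.prob (MPath.cons p hstep rest) = p * rest.prob := rfl
            rw [h1, add_comm (∑ x ∈ PGCL.succsS π ε s, x.1 * ∑ t ∈ PGCL.tails x G, t.prob)]
            gcongr
            exact ihG (fun ρ hρ => hlen ρ (Finset.mem_insert_of_mem hρ))
      calc ∑ ρ ∈ F, ρ.prob
          ≤ ∑ x ∈ PGCL.succsS π ε s, x.1 * ∑ t ∈ PGCL.tails x F, t.prob := key F hF
        _ ≤ ∑ x ∈ PGCL.succsS π ε s, x.1 * 1 := by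
            apply Finset.sum_le_sum
            intro x hx
            have hx1 : 0 ≤ x.1 := PGCL.succsS_nonneg s x hx
            have hle : ∑ t ∈ PGCL.tails x F, t.prob ≤ 1 := by
              apply ih
              intro t ht
              rcases PGCL.mem_tails.1 ht with ⟨ρ, hρ, hρt⟩
              have := PGCL.tailAt_plen hρt
              have hlen := hF ρ hρ
              omega
            exact mul_le_mul_of_nonneg_left hle hx1
        _ ≤ 1 := by simpa using PGCL.succsS_sum_le_one (π := π) (ε := ε) s

end AuxForallBox2

section AuxForallBox3

open PGCL

lemma PGCL.ind_nonneg_s6 (P : Prop) : 0 ≤ PGCL.ind P := by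
  unfold PGCL.ind; split <;> norm_num

lemma PGCL.ind_le_one_s6 (P : Prop) : PGCL.ind P ≤ 1 := by
  unfold PGCL.ind; split <;> norm_num

lemma PGCL.ind_mono_s6 {P Q : Prop} (h : P → Q) : PGCL.ind P ≤ PGCL.ind Q := by
  unfold PGCL.ind
  split_ifs with h1 h2
  any_goals norm_num
  exact absurd (h h1) h2

lemma PGCL.summable_reward_s6 {π : Policy} (σ : PState) (r : PVal → ℝ)
    (h0 : ∀ v, 0 ≤ r v) (h1 : ∀ v, r v ≤ 1) :
    Summable (fun ρ : MPath π σ => ρ.prob * r ρ.finalVal) := by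
  apply summable_of_sum_le (c := 1)
  · exact Pi.le_def.mpr fun ρ => mul_nonneg (PGCL.mpath_prob_nonneg ρ) (h0 _)
  · intro u
    calc ∑ ρ ∈ u, ρ.prob * r ρ.finalVal
        ≤ ∑ ρ ∈ u, ρ.prob := by
          apply Finset.sum_le_sum
          intro ρ _
          exact mul_le_of_le_one_right (PGCL.mpath_prob_nonneg ρ) (h1 _)
      _ ≤ 1 := PGCL.sum_prob_le_one (u.sup PGCL.plen) σ u
          (fun ρ hρ => Finset.le_sup hρ)

lemma PGCL.expReward_mono {π : Policy} {σ : PState} {r₁ r₂ : PVal → ℝ}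
    (h10 : ∀ v, 0 ≤ r₁ v) (h11 : ∀ v, r₁ v ≤ 1)
    (h20 : ∀ v, 0 ≤ r₂ v) (h21 : ∀ v, r₂ v ≤ 1)
    (hmono : ∀ v, r₁ v ≤ r₂ v) :
    expReward π σ r₁ ≤ expReward π σ r₂ :=
  Summable.tsum_le_tsum
    (fun ρ => mul_le_mul_of_nonneg_left (hmono _) (PGCL.mpath_prob_nonneg ρ))
    (PGCL.summable_reward_s6 σ r₁ h10 h11) (PGCL.summable_reward_s6 σ r₂ h20 h21)

lemma PGCL.expectation_mono_s6 {σ : PState} {r₁ r₂ : PVal → ℝ}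
    (h10 : ∀ v, 0 ≤ r₁ v) (h11 : ∀ v, r₁ v ≤ 1)
    (h20 : ∀ v, 0 ≤ r₂ v) (h21 : ∀ v, r₂ v ≤ 1)
    (hmono : ∀ v, r₁ v ≤ r₂ v) :
    expectation σ r₁ ≤ expectation σ r₂ := by
  apply ciInf_mono
  · refine ⟨0, ?_⟩
    rintro x ⟨π, rfl⟩
    exact tsum_nonneg fun ρ => mul_nonneg (PGCL.mpath_prob_nonneg ρ) (h10 _)
  · intro π
    exact PGCL.expReward_mono h10 h11 h20 h21 hmono

end AuxForallBox3

/-- The universal quantifier commutes out of the p-box: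
    if `ε ⊨ [s]_p (∀l·φ)` then `ε ⊨ ∀l·[s]_p φ`. -/
theorem forall_out_of_pbox (ε : PVal) (η : LEnv) (s : Stmt) (φ : Formula)
    (l : String) (p : PVal → ℝ) (hp : ∀ ε', p ε' ∈ Set.Icc (0 : ℝ) 1)
    (h : Sat (.box s p (.all l φ)) ε η) :
    Sat (.all l (.box s p φ)) ε η := by
  intro v
  simp only [Sat] at h ⊢
  refine le_trans h ?_
  exact PGCL.expectation_mono_s6 (fun _ => PGCL.ind_nonneg_s6 _) (fun _ => PGCL.ind_le_one_s6 _)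
    (fun _ => PGCL.ind_nonneg_s6 _) (fun _ => PGCL.ind_le_one_s6 _)
    (fun ε' => PGCL.ind_mono_s6 (fun hall => hall v))
end

section
/- Conditional unfolding (true branch): for every valuation ε, Boolean expression e (also an atomic pDL formula), pGCL programs s₁, s₂, pDL formula φ, and expectation lower bound p, if ε ⊨ e ∧ [s₁]_p φ then ε ⊨ [if e {s₁} else {s₂}]_p φ. -/
open PGCL

namespace PGCL

variable {π : Policy}

theorem Step.eq_of_ifte_of_true {ε : PVal} {e : PVal → Bool} {s₁ s₂ : Stmt} {q : ℝ}
    {σ' : PState} (he : e ε = true) (h : Step π (ε, Stmt.ifte e s₁ s₂) q σ') :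
    q = 1 ∧ σ' = (ε, s₁) := by
  cases h with
  | iteT _ => exact ⟨rfl, rfl⟩
  | iteF hf => simp [he] at hf

def MPath.consEquiv {σ σ' : PState} (hstep : Step π σ 1 σ')
    (huniq : ∀ q τ, Step π σ q τ → q = 1 ∧ τ = σ') : MPath π σ' ≃ MPath π σ where
  toFun ρ := .cons 1 hstep ρ
  invFun ρ := match σ, ρ, hstep, huniq with
    | _, .nil _, hstep, _ => nomatch hstep
    | _, .cons q h rest, _, huniq => (huniq q _ h).2 ▸ rest
  left_inv _ := rfl
  right_inv ρ := match σ, ρ, hstep, huniq with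
    | _, .nil _, hstep, _ => nomatch hstep
    | _, .cons q h rest, _, huniq => by
      obtain ⟨rfl, rfl⟩ := huniq q _ h
      rfl

theorem expReward_eq_of_step {σ σ' : PState} (hstep : Step π σ 1 σ')
    (huniq : ∀ q τ, Step π σ q τ → q = 1 ∧ τ = σ') (r : PVal → ℝ) :
    expReward π σ r = expReward π σ' r := by
  rw [expReward, ← (MPath.consEquiv hstep huniq).tsum_eq]
  simp [expReward, MPath.consEquiv, MPath.prob, MPath.finalVal]

theorem expectation_ifte_of_true {ε : PVal} {e : PVal → Bool} (he : e ε = true)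
    (s₁ s₂ : Stmt) (r : PVal → ℝ) :
    expectation (ε, Stmt.ifte e s₁ s₂) r = expectation (ε, s₁) r :=
  iInf_congr fun _ ↦
    expReward_eq_of_step (Step.iteT he) (fun _ _ h ↦ h.eq_of_ifte_of_true he) r

end PGCL

theorem conditional_true_general (ε : PVal) (η : LEnv) (e : PVal → Bool)
    (s₁ s₂ : Stmt) (φ : Formula)
    (p : PVal → ℝ)
    (h : Sat (.conj (.atom fun ε' _ => e ε' = true) (.box s₁ p φ)) ε η) :
    Sat (.box (.ifte e s₁ s₂) p φ) ε η := by
  obtain ⟨he, hbox⟩ := h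
  exact hbox.trans_eq (expectation_ifte_of_true he s₁ s₂ _).symm

/-- Conditional unfolding (true branch): if `ε ⊨ e ∧ [s₁]_p φ`
    then `ε ⊨ [if e {s₁} else {s₂}]_p φ`. -/
theorem conditional_true (ε : PVal) (η : LEnv) (e : PVal → Bool)
    (s₁ s₂ : Stmt) (φ : Formula)
    (p : PVal → ℝ) (hp : ∀ ε', p ε' ∈ Set.Icc (0 : ℝ) 1)
    (h : Sat (.conj (.atom fun ε' _ => e ε' = true) (.box s₁ p φ)) ε η) :
    Sat (.box (.ifte e s₁ s₂) p φ) ε η :=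
  conditional_true_general ε η e s₁ s₂ φ p h
end

section
/- Conditional unfolding (false branch): for every valuation ε, Boolean expression e (also an atomic pDL formula), pGCL programs s₁, s₂, pDL formula φ, and expectation lower bound p, if ε ⊨ ¬e ∧ [s₂]_p φ then ε ⊨ [if e {s₁} else {s₂}]_p φ. -/
namespace PGCL

-- Prefixing the forced step is a bijection from paths out of `σ'` onto paths out of `σ`.
theorem expReward_eq_of_step_unique {π : Policy} {σ σ' : PState} (hstep : Step π σ 1 σ')
    (huniq : ∀ p τ, Step π σ p τ → p = 1 ∧ τ = σ') (r : PVal → ℝ) :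
    expReward π σ r = expReward π σ' r := by
  have hbij : Function.Bijective (fun ρ : MPath π σ' => MPath.cons 1 hstep ρ) := by
    refine ⟨fun ρ₁ ρ₂ h => by simpa using h, fun ρ => ?_⟩
    cases ρ with
    | nil => cases hstep
    | cons p hs rest =>
      obtain ⟨rfl, rfl⟩ := huniq _ _ hs
      exact ⟨rest, rfl⟩
  rw [expReward, ← (Equiv.ofBijective _ hbij).tsum_eq]
  simp [expReward, MPath.prob, MPath.finalVal]

theorem step_ifte_of_false {π : Policy} {ε : PVal} {e : PVal → Bool} {s₁ s₂ : Stmt}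
    (he : e ε = false) {p : ℝ} {τ : PState} (hstep : Step π (ε, .ifte e s₁ s₂) p τ) :
    p = 1 ∧ τ = (ε, s₂) := by
  cases hstep with
  | iteT het => simp_all
  | iteF => exact ⟨rfl, rfl⟩

theorem expectation_ifte_of_false {ε : PVal} {e : PVal → Bool} {s₁ s₂ : Stmt}
    (he : e ε = false) (r : PVal → ℝ) :
    expectation (ε, .ifte e s₁ s₂) r = expectation (ε, s₂) r :=
  iInf_congr fun _ =>
    expReward_eq_of_step_unique (.iteF he) (fun _ _ => step_ifte_of_false he) r

end PGCL

open PGCL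

theorem conditional_false_general (ε : PVal) (η : LEnv) (e : PVal → Bool)
    (s₁ s₂ : Stmt) (φ : Formula)
    (p : PVal → ℝ)
    (h : Sat (.conj (.neg (.atom fun ε' _ => e ε' = true)) (.box s₂ p φ)) ε η) :
    Sat (.box (.ifte e s₁ s₂) p φ) ε η := by
  obtain ⟨hne, hbox⟩ := h
  simp only [Sat] at hne hbox ⊢
  rwa [expectation_ifte_of_false (Bool.eq_false_iff.mpr hne)]

/-- Conditional unfolding (false branch): if `ε ⊨ ¬e ∧ [s₂]_p φ`
    then `ε ⊨ [if e {s₁} else {s₂}]_p φ`. -/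
theorem conditional_false (ε : PVal) (η : LEnv) (e : PVal → Bool)
    (s₁ s₂ : Stmt) (φ : Formula)
    (p : PVal → ℝ) (hp : ∀ ε', p ε' ∈ Set.Icc (0 : ℝ) 1)
    (h : Sat (.conj (.neg (.atom fun ε' _ => e ε' = true)) (.box s₂ p φ)) ε η) :
    Sat (.box (.ifte e s₁ s₂) p φ) ε η :=
  conditional_false_general ε η e s₁ s₂ φ p h
end

section
/- While-loop unfolding: for every valuation ε, Boolean expression e, pGCL program s, pDL formula φ, and expectation lower bound p, ε ⊨ [if e {s; while e {s}} else {skip}]_p φ if and only if ε ⊨ [while e {s}]_p φ. -/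
/-!
Under a fixed policy, both `if e {s; while e {s}} else {skip}` and `while e {s}` take a single
step with probability 1 from `ε`, and to the same state. Prefixing such a certain step is a
probability-preserving bijection on paths that keeps the final valuation, so both programs have
the same expected reward under every policy, hence the same expectation.
-/

namespace PGCL

variable {π : Policy}

theorem MPath.cons_one_bijective {σ σ' : PState}
    (hσ : ∀ p τ, Step π σ p τ ↔ p = 1 ∧ τ = σ') :
    Function.Bijective (fun ρ : MPath π σ' => MPath.cons 1 ((hσ 1 σ').2 ⟨rfl, rfl⟩) ρ) := by
  refine ⟨fun ρ₁ ρ₂ h => by simpa using h, fun ρ => ?_⟩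
  cases ρ with
  | nil ε' => nomatch (hσ 1 σ').2 ⟨rfl, rfl⟩
  | cons q h rest =>
    obtain ⟨rfl, rfl⟩ := (hσ _ _).1 h
    exact ⟨rest, rfl⟩

theorem expReward_eq_of_step_iff {σ σ' : PState}
    (hσ : ∀ p τ, Step π σ p τ ↔ p = 1 ∧ τ = σ') (r : PVal → ℝ) :
    expReward π σ r = expReward π σ' r := by
  unfold expReward
  rw [← (Equiv.ofBijective _ (MPath.cons_one_bijective hσ)).tsum_eq]
  simp only [Equiv.ofBijective_apply, MPath.prob, MPath.finalVal, one_mul]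

theorem step_ifte_iff {ε : PVal} {e : PVal → Bool} {s₁ s₂ : Stmt} {p : ℝ} {τ : PState} :
    Step π (ε, .ifte e s₁ s₂) p τ ↔ p = 1 ∧ τ = (ε, cond (e ε) s₁ s₂) := by
  constructor
  · intro h
    cases h <;> simp [*]
  · rintro ⟨rfl, rfl⟩
    cases he : e ε
    · exact .iteF he
    · exact .iteT he

theorem step_whileLoop_iff {ε : PVal} {e : PVal → Bool} {s : Stmt} {p : ℝ} {τ : PState} :
    Step π (ε, .whileLoop e s) p τ ↔
      p = 1 ∧ τ = (ε, cond (e ε) (.seq s (.whileLoop e s)) .skip) := by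
  constructor
  · intro h
    cases h <;> simp [*]
  · rintro ⟨rfl, rfl⟩
    cases he : e ε
    · exact .whileF he
    · exact .whileT he

theorem expectation_ifte_eq_whileLoop (ε : PVal) (e : PVal → Bool) (s : Stmt)
    (r : PVal → ℝ) :
    expectation (ε, .ifte e (.seq s (.whileLoop e s)) .skip) r =
      expectation (ε, .whileLoop e s) r := by
  refine iInf_congr fun π => ?_
  rw [expReward_eq_of_step_iff (fun _ _ => step_ifte_iff),
    expReward_eq_of_step_iff (fun _ _ => step_whileLoop_iff)]

end PGCL

open PGCL

theorem while_unfolding_general (ε : PVal) (η : LEnv) (e : PVal → Bool) (s : Stmt)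
    (φ : Formula) (p : PVal → ℝ) :
    Sat (.box (.ifte e (.seq s (.whileLoop e s)) .skip) p φ) ε η ↔
      Sat (.box (.whileLoop e s) p φ) ε η := by
  simp only [Sat, expectation_ifte_eq_whileLoop]

/-- While-loop unfolding:
    `ε ⊨ [if e {s; while e {s}} else {skip}]_p φ` iff `ε ⊨ [while e {s}]_p φ`. -/
theorem while_unfolding (ε : PVal) (η : LEnv) (e : PVal → Bool) (s : Stmt)
    (φ : Formula) (p : PVal → ℝ) (hp : ∀ ε', p ε' ∈ Set.Icc (0 : ℝ) 1) :
    Sat (.box (.ifte e (.seq s (.whileLoop e s)) .skip) p φ) ε η ↔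
      Sat (.box (.whileLoop e s) p φ) ε η :=
  while_unfolding_general ε η e s φ p
end
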